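/- Let Γ be a finite connected graph without separating edges with length function λ, and let ω(Γ,λ) = λ_*⁻¹(incl) ∈ Ω¹(Γ, H₁(Γ,ℝ)) be the canonical balanced cocycle corresponding to the inclusion H₁(Γ) → H₁(Γ,ℝ). Then ω(Γ,λ)(e) ≠ 0 for every half-edge e. -/
import Mathlib


open Finset

/-- A finite graph: vertices, half-edges with a free involution, and a target map. -/
structure FinGraph where
  V : Type
  H : Type
  [fV : Fintype V]
  [fH : Fintype H]
  [dV : DecidableEq V]
  [dH : DecidableEq H]
  bar : H → H
  bar_invol : ∀ e, bar (bar e) = e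
  bar_ne : ∀ e, bar e ≠ e
  tar : H → V

attribute [instance] FinGraph.fV FinGraph.fH FinGraph.dV FinGraph.dH

namespace FinGraph

variable (G : FinGraph)

/-- The source of a half-edge is the target of its other half. -/
def src (e : G.H) : G.V := G.tar (G.bar e)

/-- One step along a half-edge belonging to the allowed set `A`. -/
def Step (A : Set G.H) (v w : G.V) : Prop := ∃ e, e ∈ A ∧ G.src e = v ∧ G.tar e = w

/-- Reachability using only half-edges in `A`. -/
def ReachIn (A : Set G.H) (v w : G.V) : Prop := Relation.ReflTransGen (G.Step A) v w

/-- The graph is connected. -/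
def Connected : Prop := ∀ v w : G.V, G.ReachIn Set.univ v w

/-- The valence of a vertex: the number of half-edges incident to it. -/
def valence (v : G.V) : ℕ := (univ.filter (fun e => G.tar e = v)).card

/-- An edge `{e, ē}` is separating if deleting it disconnects the graph. -/
def IsSeparating (e : G.H) : Prop :=
  ¬ ∀ v w : G.V, G.ReachIn {h | h ≠ e ∧ h ≠ G.bar e} v w

/-- The graph has first Betti number (rank) `n`; for a connected graph this
says `#edges = #vertices + n - 1`, i.e. `#H + 2 = 2(#V + n)`. -/
def HasRank (n : ℕ) : Prop := Fintype.card G.H + 2 = 2 * (Fintype.card G.V + n)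

end FinGraph

namespace FinGraph

variable (G : FinGraph)

/-- A balanced 1-cocycle with values in an additive group. -/
def IsBalanced {W : Type*} [AddCommGroup W] (ω : G.H → W) : Prop :=
  (∀ e, ω (G.bar e) = - ω e) ∧
  ∀ v : G.V, ∑ e ∈ univ.filter (fun e => G.tar e = v), ω e = 0

/-- The space `Ω¹(Γ, V)` of balanced `V`-valued 1-cocycles. -/
def Omega (W : Type*) [AddCommGroup W] [Module ℝ W] : Submodule ℝ (G.H → W) where
  carrier := {ω | G.IsBalanced ω}
  zero_mem' := ⟨fun e => by simp, fun v => by simp⟩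
  add_mem' := by
    intro a b ha hb
    refine ⟨fun e => ?_, fun v => ?_⟩
    · simp only [Pi.add_apply, ha.1 e, hb.1 e]; abel
    · simp only [Pi.add_apply, Finset.sum_add_distrib, ha.2 v, hb.2 v, add_zero]
  smul_mem' := by
    intro r a ha
    refine ⟨fun e => ?_, fun v => ?_⟩
    · simp only [Pi.smul_apply, ha.1 e, smul_neg]
    · simp only [Pi.smul_apply, ← Finset.smul_sum, ha.2 v, smul_zero]

/-- The group of 1-cycles (the model for `H₁(Γ)`): antisymmetric integer functions
on half-edges with vanishing vertex sums. -/
def cycles : AddSubgroup (G.H → ℤ) where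
  carrier := {c | G.IsBalanced c}
  zero_mem' := ⟨fun e => by simp, fun v => by simp⟩
  add_mem' := by
    intro a b ha hb
    refine ⟨fun e => ?_, fun v => ?_⟩
    · simp only [Pi.add_apply, ha.1 e, hb.1 e]; abel
    · simp only [Pi.add_apply, Finset.sum_add_distrib, ha.2 v, hb.2 v, add_zero]
  neg_mem' := by
    intro a ha
    refine ⟨fun e => ?_, fun v => ?_⟩
    · simp only [Pi.neg_apply, ha.1 e]
    · simp only [Pi.neg_apply, Finset.sum_neg_distrib, ha.2 v, neg_zero]

/-- A spanning (maximal) tree, given as a `bar`-closed set of half-edges. -/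
def IsSpanningTree (S : Finset G.H) : Prop :=
  (∀ e ∈ S, G.bar e ∈ S) ∧ (∀ v w : G.V, G.ReachIn ↑S v w) ∧
    S.card + 2 = 2 * Fintype.card G.V

/-- `es` is a choice of one half-edge from each of the `r` edges not in `S`. -/
def IsComplement (S : Finset G.H) {r : ℕ} (es : Fin r → G.H) : Prop :=
  (∀ i, es i ∉ S) ∧ ∀ e ∉ S, ∃! i, e = es i ∨ e = G.bar (es i)

/-- `ω` is nonsingular: its values span an `r`-dimensional subspace. -/
def Nonsingular {W : Type*} [AddCommGroup W] [Module ℝ W] (ω : G.H → W) (r : ℕ) : Prop :=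
  Module.finrank ℝ ↥(Submodule.span ℝ (Set.range ω)) = r

/-- A length function on the graph. -/
def IsLengthFunction (lam : G.H → ℝ) : Prop :=
  (∀ e, 0 ≤ lam e ∧ lam e ≤ 1/2) ∧ (∀ e, lam (G.bar e) = lam e) ∧
    ∀ c ∈ G.cycles, c ≠ 0 → ∃ e, c e ≠ 0 ∧ lam e = 1/2

end FinGraph


namespace FinGraph
variable (G : FinGraph)

def IsWalk : List G.H → G.V → G.V → Prop
  | [], v, w => v = w
  | e :: l, v, w => G.src e = v ∧ IsWalk l (G.tar e) w

lemma isWalk_nil (v : G.V) : G.IsWalk [] v v := rfl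

lemma isWalk_cons {e : G.H} {t : List G.H} {v w : G.V} (h1 : G.src e = v)
    (h2 : G.IsWalk t (G.tar e) w) : G.IsWalk (e :: t) v w := ⟨h1, h2⟩

lemma isWalk_append {l l' : List G.H} {v w u : G.V} (h : G.IsWalk l v w)
    (h' : G.IsWalk l' w u) : G.IsWalk (l ++ l') v u := by
  induction l generalizing v with
  | nil => cases h; exact h'
  | cons e t ih => exact ⟨h.1, ih h.2⟩


variable {G}

lemma reach_walk {A : Set G.H} {v w : G.V} (h : G.ReachIn A v w) :
    ∃ l : List G.H, (∀ e ∈ l, e ∈ A) ∧ G.IsWalk l v w := by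
  induction h with
  | refl => exact ⟨[], by simp, G.isWalk_nil v⟩
  | tail _ step ih =>
    obtain ⟨l, hlA, hlw⟩ := ih
    obtain ⟨e, heA, hsrc, htar⟩ := step
    refine ⟨l ++ [e], ?_, G.isWalk_append hlw (G.isWalk_cons hsrc (htar ▸ G.isWalk_nil _))⟩
    intro x hx
    rcases List.mem_append.mp hx with h | h
    · exact hlA x h
    · simp at h; subst h; exact heA

variable (G)

def wcount (l : List G.H) (h : G.H) : ℤ := (l.count h : ℤ) - (l.count (G.bar h) : ℤ)

variable {G}

lemma wcount_bar (l : List G.H) (h : G.H) : G.wcount l (G.bar h) = - G.wcount l h := by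
  simp [wcount, G.bar_invol]

lemma wcount_cons (e : G.H) (l : List G.H) (h : G.H) :
    G.wcount (e :: l) h
      = G.wcount l h + (if e = h then 1 else 0) - (if G.bar e = h then 1 else 0) := by
  have h3 : (e = G.bar h) ↔ (G.bar e = h) :=
    ⟨fun hh => by rw [hh, G.bar_invol], fun hh => by rw [← hh, G.bar_invol]⟩
  simp only [wcount, List.count_cons, beq_iff_eq, h3]
  split_ifs <;> push_cast <;> ring

lemma wcount_vertexsum {l : List G.H} {v w : G.V} (h : G.IsWalk l v w) (u : G.V) :
    ∑ e ∈ univ.filter (fun e => G.tar e = u), G.wcount l e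
      = (if w = u then 1 else 0) - (if v = u then 1 else 0) := by
  induction l generalizing v with
  | nil => cases h; simp [wcount]
  | cons e t ih =>
    obtain ⟨hsrc, ht⟩ := h
    have hih := ih ht
    simp only [wcount_cons, Finset.sum_add_distrib, Finset.sum_sub_distrib, hih]
    rw [Finset.sum_ite_eq _ e, Finset.sum_ite_eq _ (G.bar e)]
    have htb : G.tar (G.bar e) = v := hsrc
    simp only [Finset.mem_filter, Finset.mem_univ, true_and, htb]
    by_cases h1 : G.tar e = u <;> by_cases h2 : v = u <;> by_cases h3 : w = u <;>
      simp [h1, h2, h3]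

lemma count_pairing (g : G.H → ℝ) (l : List G.H) :
    ∑ h : G.H, (l.count h : ℝ) * g h = (l.map g).sum := by
  induction l with
  | nil => simp
  | cons e t ih =>
    simp only [List.count_cons, beq_iff_eq, List.map_cons, List.sum_cons]
    push_cast
    rw [Finset.sum_congr rfl (fun x _ => (by split_ifs <;> ring :
      ((t.count x : ℝ) + if e = x then 1 else 0) * g x
        = (t.count x : ℝ) * g x + (if e = x then g x else 0)))]
    rw [Finset.sum_add_distrib, Finset.sum_ite_eq univ e g, ih]
    simp [add_comm]

lemma wcount_pairing (g : G.H → ℝ) (hg : ∀ h, g (G.bar h) = - g h) (l : List G.H) :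
    ∑ h : G.H, (G.wcount l h : ℝ) * g h = 2 * (l.map g).sum := by
  have e2 : ∑ h : G.H, (l.count (G.bar h) : ℝ) * g h = - (l.map g).sum := by
    have hb : Function.Bijective G.bar :=
      Function.Involutive.bijective (fun a => G.bar_invol a)
    rw [Fintype.sum_bijective G.bar hb _ (fun h => (l.count h : ℝ) * g (G.bar h))
      (fun x => by simp [G.bar_invol])]
    simp only [hg, mul_neg, Finset.sum_neg_distrib]
    rw [count_pairing]
  have e1 := count_pairing g l
  calc ∑ h : G.H, (G.wcount l h : ℝ) * g h
      = ∑ h : G.H, ((l.count h : ℝ) * g h - (l.count (G.bar h) : ℝ) * g h) := by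
        apply Finset.sum_congr rfl; intro h _
        simp only [wcount]; push_cast; ring
    _ = (l.map g).sum - (-(l.map g).sum) := by rw [Finset.sum_sub_distrib, e1, e2]
    _ = 2 * (l.map g).sum := by ring

variable (G)
def wrev (l : List G.H) : List G.H := (l.reverse).map G.bar
variable {G}

lemma isWalk_wrev {l : List G.H} {v w : G.V} (h : G.IsWalk l v w) :
    G.IsWalk (G.wrev l) w v := by
  induction l generalizing v with
  | nil => cases h; exact G.isWalk_nil _
  | cons e t ih =>
    obtain ⟨hsrc, ht⟩ := h
    have hrw : G.wrev (e :: t) = G.wrev t ++ [G.bar e] := by simp [wrev]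
    rw [hrw]
    refine G.isWalk_append (ih ht) (G.isWalk_cons ?_ ?_)
    · show G.tar (G.bar (G.bar e)) = G.tar e; rw [G.bar_invol]
    · show G.IsWalk [] (G.tar (G.bar e)) v; exact hsrc ▸ G.isWalk_nil _

lemma wrev_sum (g : G.H → ℝ) (hg : ∀ h, g (G.bar h) = - g h) (l : List G.H) :
    ((G.wrev l).map g).sum = - (l.map g).sum := by
  induction l with
  | nil => simp [wrev]
  | cons e t ih =>
    have hrw : G.wrev (e :: t) = G.wrev t ++ [G.bar e] := by simp [wrev]
    rw [hrw]
    simp [ih, hg]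



/-- An antisymmetric edge function orthogonal to all integer cycles is a coboundary. -/
lemma exists_potential (hconn : G.Connected) (g : G.H → ℝ)
    (hg : ∀ h, g (G.bar h) = - g h)
    (horth : ∀ c ∈ G.cycles, ∑ h : G.H, ((c h : ℤ) : ℝ) * g h = 0) (v₀ : G.V) :
    ∃ φ : G.V → ℝ, ∀ e : G.H, φ (G.tar e) - φ (G.src e) = g e := by
  have hex : ∀ v : G.V, ∃ l : List G.H,
      (∀ e ∈ l, e ∈ (Set.univ : Set G.H)) ∧ G.IsWalk l v₀ v :=
    fun v => reach_walk (hconn v₀ v)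
  choose W hWA hW using hex
  refine ⟨fun v => ((W v).map g).sum, fun e => ?_⟩
  set l : List G.H := W (G.src e) ++ e :: G.wrev (W (G.tar e)) with hl
  have hwalk : G.IsWalk l v₀ v₀ :=
    G.isWalk_append (hW (G.src e))
      (G.isWalk_cons rfl (isWalk_wrev (hW (G.tar e))))
  have hmem : G.wcount l ∈ G.cycles :=
    ⟨wcount_bar l, fun u => by rw [wcount_vertexsum hwalk]; ring⟩
  have h0 := horth _ hmem
  rw [wcount_pairing g hg] at h0
  have hsum : (l.map g).sum
      = ((W (G.src e)).map g).sum + g e - ((W (G.tar e)).map g).sum := by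
    rw [hl]
    simp [wrev_sum g hg]
    ring
  rw [hsum] at h0
  have : ((W (G.src e)).map g).sum + g e - ((W (G.tar e)).map g).sum = 0 := by linarith
  linarith

/-- Summing a flow against a coboundary gives zero. -/
lemma flow_coboundary (f : G.H → ℝ) (hfbar : ∀ h, f (G.bar h) = - f h)
    (hfsum : ∀ v : G.V, ∑ e ∈ univ.filter (fun e => G.tar e = v), f e = 0)
    (φ : G.V → ℝ) :
    ∑ h : G.H, f h * (φ (G.tar h) - φ (G.src h)) = 0 := by
  have hb : Function.Bijective G.bar :=
    Function.Involutive.bijective (fun a => G.bar_invol a)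
  have e2 : ∑ h : G.H, f h * φ (G.src h) = - ∑ h : G.H, f h * φ (G.tar h) := by
    rw [Fintype.sum_bijective G.bar hb _ (fun h => f (G.bar h) * φ (G.tar h))
      (fun x => by simp [src, G.bar_invol])]
    simp only [hfbar, neg_mul, Finset.sum_neg_distrib]
  have e1 : ∑ h : G.H, f h * φ (G.tar h) = 0 := by
    rw [← Finset.sum_fiberwise univ (fun h => G.tar h) (fun h => f h * φ (G.tar h))]
    refine Finset.sum_eq_zero fun v _ => ?_
    have : ∑ h ∈ univ.filter (fun h => G.tar h = v), f h * φ (G.tar h)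
        = ∑ h ∈ univ.filter (fun h => G.tar h = v), f h * φ v := by
      refine Finset.sum_congr rfl fun h hh => ?_
      simp only [Finset.mem_filter] at hh
      rw [hh.2]
    rw [this, ← Finset.sum_mul, hfsum v, zero_mul]
  calc ∑ h : G.H, f h * (φ (G.tar h) - φ (G.src h))
      = ∑ h : G.H, (f h * φ (G.tar h) - f h * φ (G.src h)) := by
        exact Finset.sum_congr rfl fun h _ => by ring
    _ = 0 := by rw [Finset.sum_sub_distrib, e1, e2, e1]; ring

end FinGraph


/-- the canonical cocycle `ω(Γ,λ) = λ_*⁻¹(incl)` of a graph without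
separating edges is nowhere zero. Here `H₁(Γ,ℝ)` is modelled as the subspace of
real-valued antisymmetric cycle functions inside `Γ.H → ℝ`, and the hypothesis
`hcanon` says `λ_*(ω)` is the inclusion `H₁(Γ) → H₁(Γ,ℝ)`. -/
theorem canonical_cocycle_nowhere_zero (G : FinGraph) (hconn : G.Connected)
    (hnosep : ∀ e : G.H, ¬ G.IsSeparating e)
    (lam : G.H → ℝ) (hlam : G.IsLengthFunction lam)
    (ω : G.H → (G.H → ℝ)) (hω : ω ∈ G.Omega (G.H → ℝ))
    (hcanon : ∀ c ∈ G.cycles,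
      ∑ e : G.H, ((c e : ℝ) * lam e) • ω e = (fun h => (c h : ℝ))) :
    ∀ e : G.H, ω e ≠ 0 := by
  intro e₀ hzero
  have hωb : G.IsBalanced ω := hω
  set f : G.H → ℝ := fun h => ω h e₀ - ω h (G.bar e₀) with hf
  have hfbar : ∀ h, f (G.bar h) = - f h := by
    intro h
    simp only [hf, hωb.1 h, Pi.neg_apply]
    ring
  have hfsum : ∀ v : G.V, ∑ e ∈ univ.filter (fun e => G.tar e = v), f e = 0 := by
    intro v
    have h2 := hωb.2 v
    have h2a := congrFun h2 e₀
    have h2b := congrFun h2 (G.bar e₀)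
    simp only [Finset.sum_apply, Pi.zero_apply] at h2a h2b
    simp only [hf, Finset.sum_sub_distrib, h2a, h2b, sub_zero]
  set g : G.H → ℝ := fun h =>
    lam h * f h - ((if h = e₀ then (1:ℝ) else 0) - (if h = G.bar e₀ then 1 else 0)) with hgdef
  have hbne : G.bar e₀ ≠ e₀ := G.bar_ne e₀
  have hIff1 : ∀ h : G.H, (G.bar h = e₀) ↔ (h = G.bar e₀) :=
    fun h => ⟨fun hh => by rw [← hh, G.bar_invol], fun hh => by rw [hh, G.bar_invol]⟩
  have hIff2 : ∀ h : G.H, (G.bar h = G.bar e₀) ↔ (h = e₀) :=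
    fun h => ⟨fun hh => by rw [← G.bar_invol h, hh, G.bar_invol], fun hh => by rw [hh]⟩
  have hgbar : ∀ h, g (G.bar h) = - g h := by
    intro h
    simp only [hgdef, hfbar h, hlam.2.1 h]
    rw [if_congr (hIff1 h) rfl rfl, if_congr (hIff2 h) rfl rfl]
    ring
  have horth : ∀ c ∈ G.cycles, ∑ h : G.H, ((c h : ℤ) : ℝ) * g h = 0 := by
    intro c hc
    have hcan := hcanon c hc
    have h1 := congrFun hcan e₀
    have h2 := congrFun hcan (G.bar e₀)
    simp only [Finset.sum_apply, Pi.smul_apply, smul_eq_mul] at h1 h2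
    have hA : ∑ h : G.H, (c h : ℝ) * (lam h * f h) = (c e₀ : ℝ) - (c (G.bar e₀) : ℝ) := by
      calc ∑ h : G.H, (c h : ℝ) * (lam h * f h)
          = ∑ h : G.H, (((c h : ℝ) * lam h) * ω h e₀
              - ((c h : ℝ) * lam h) * ω h (G.bar e₀)) :=
            Finset.sum_congr rfl fun h _ => by simp only [hf]; ring
        _ = (c e₀ : ℝ) - (c (G.bar e₀) : ℝ) := by
            rw [Finset.sum_sub_distrib, h1, h2]
    have hB : ∑ h : G.H, (c h : ℝ) *
        ((if h = e₀ then (1:ℝ) else 0) - (if h = G.bar e₀ then 1 else 0))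
        = (c e₀ : ℝ) - (c (G.bar e₀) : ℝ) := by
      have hterm : ∀ h : G.H, (c h : ℝ) *
          ((if h = e₀ then (1:ℝ) else 0) - (if h = G.bar e₀ then 1 else 0))
          = (if h = e₀ then (c h : ℝ) else 0) - (if h = G.bar e₀ then (c h : ℝ) else 0) := by
        intro h; split_ifs <;> ring
      rw [Finset.sum_congr rfl fun h _ => hterm h, Finset.sum_sub_distrib,
        Finset.sum_ite_eq' univ e₀ (fun h => (c h : ℝ)),
        Finset.sum_ite_eq' univ (G.bar e₀) (fun h => (c h : ℝ))]
      simp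
    calc ∑ h : G.H, ((c h : ℤ) : ℝ) * g h
        = ∑ h : G.H, ((c h : ℝ) * (lam h * f h) - (c h : ℝ) *
            ((if h = e₀ then (1:ℝ) else 0) - (if h = G.bar e₀ then 1 else 0))) :=
          Finset.sum_congr rfl fun h _ => by simp only [hgdef]; ring
      _ = 0 := by rw [Finset.sum_sub_distrib, hA, hB]; ring
  obtain ⟨φ, hφ⟩ := FinGraph.exists_potential hconn g hgbar horth (G.tar e₀)
  have henergy : ∑ h : G.H, f h * g h = 0 := by
    have h0 := FinGraph.flow_coboundary f hfbar hfsum φ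
    calc ∑ h : G.H, f h * g h
        = ∑ h : G.H, f h * (φ (G.tar h) - φ (G.src h)) :=
          Finset.sum_congr rfl fun h _ => by rw [hφ h]
      _ = 0 := h0
  have hf0 : f e₀ = 0 := by simp [hf, hzero]
  have hfb0 : f (G.bar e₀) = 0 := by rw [hfbar e₀, hf0, neg_zero]
  have hsq : ∑ h : G.H, lam h * (f h * f h) = 0 := by
    have expand : ∀ h : G.H, f h * g h
        = lam h * (f h * f h)
          - ((if h = e₀ then f h else 0) - (if h = G.bar e₀ then f h else 0)) := by
      intro h; simp only [hgdef]; split_ifs <;> ring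
    rw [Finset.sum_congr rfl fun h _ => expand h, Finset.sum_sub_distrib,
      Finset.sum_sub_distrib, Finset.sum_ite_eq' univ e₀ f,
      Finset.sum_ite_eq' univ (G.bar e₀) f] at henergy
    simp only [mem_univ, if_pos, hf0, hfb0] at henergy
    linarith
  have hterm0 : ∀ h : G.H, lam h * f h = 0 := by
    intro h
    have hnn : ∀ x ∈ (univ : Finset G.H), 0 ≤ lam x * (f x * f x) :=
      fun x _ => mul_nonneg (hlam.1 x).1 (mul_self_nonneg _)
    have hz : lam h * (f h * f h) = 0 :=
      (Finset.sum_eq_zero_iff_of_nonneg hnn).mp hsq h (mem_univ h)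
    rcases mul_eq_zero.mp hz with h1 | h1
    · rw [h1, zero_mul]
    · rcases mul_eq_zero.mp h1 with h2 | h2 <;> rw [h2, mul_zero]
  have hconst : ∀ v w : G.V, G.ReachIn {h | h ≠ e₀ ∧ h ≠ G.bar e₀} v w → φ v = φ w := by
    intro v w hr
    induction hr with
    | refl => rfl
    | tail _ step ih =>
      obtain ⟨h', hmem, hsrc, htar⟩ := step
      have hg0 : g h' = 0 := by
        simp only [hgdef, hterm0 h', if_neg hmem.1, if_neg hmem.2]
        ring
      have hd := hφ h'
      rw [hg0, hsrc, htar] at hd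
      linarith
  have hreach := not_not.mp (hnosep e₀)
  have hconst0 : φ (G.src e₀) = φ (G.tar e₀) := hconst _ _ (hreach (G.src e₀) (G.tar e₀))
  have hφ0 := hφ e₀
  have hge₀ : g e₀ = -1 := by
    simp only [hgdef, hterm0 e₀, if_pos rfl,
      if_neg (fun hh : e₀ = G.bar e₀ => hbne hh.symm)]
    norm_num
  rw [hge₀] at hφ0
  linarith
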